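/- arXiv:2312.07292 — 2 statements merged into one kernel-verified Lean document; each statement's English description precedes it below -/
import Mathlib

section
/- Let μ¹ = (0, 5, 2), μ² = (5, 0, 2), μ³ = (10, 10, 1), μ⁴ = (6, 6, 11/10) in ℝ³. For every λ ∈ [0, 1], with w = (λ, 1−λ, 0), the minimum of ⟪w, μ⟫ over μ ∈ {μ¹, μ², μ³, μ⁴} equals min(5λ, 5(1−λ)) and is attained only at μ¹ or μ²; in particular ⟪w, μ³⟫ = 10 > min(⟪w, μ¹⟫, ⟪w, μ²⟫) and ⟪w, μ⁴⟫ = 6 > min(⟪w, μ¹⟫, ⟪w, μ²⟫). -/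
/-- The four mean cost vectors of the counterexample in the Remark of Section III-D. -/
noncomputable def remarkMu : Fin 4 → Fin 3 → ℝ :=
  ![![0, 5, 2], ![5, 0, 2], ![10, 10, 1], ![6, 6, 11 / 10]]

/-- For every `λ ∈ [0,1]` and weight `w = (λ, 1−λ, 0)`, the minimum of
the scalarized cost over the four vectors equals `min (5λ) (5(1−λ))`, it is attained
only at `μ¹` or `μ²`, and the scalarized costs of `μ³` and `μ⁴` are `10` and `6`
respectively, both strictly larger than `min (⟪w,μ¹⟫) (⟪w,μ²⟫)`. -/
theorem remark_segment_min_attained_only_at_mu1_mu2 :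
    ∀ lam : ℝ, lam ∈ Set.Icc (0 : ℝ) 1 →
      let w : Fin 3 → ℝ := ![lam, 1 - lam, 0]
      IsLeast {v : ℝ | ∃ a : Fin 4, v = ∑ i, w i * remarkMu a i}
        (min (5 * lam) (5 * (1 - lam))) ∧
      (∀ a : Fin 4, (∑ i, w i * remarkMu a i) = min (5 * lam) (5 * (1 - lam)) →
        a = 0 ∨ a = 1) ∧
      ((∑ i, w i * remarkMu 2 i) = 10 ∧
        min (∑ i, w i * remarkMu 0 i) (∑ i, w i * remarkMu 1 i) < 10) ∧
      ((∑ i, w i * remarkMu 3 i) = 6 ∧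
        min (∑ i, w i * remarkMu 0 i) (∑ i, w i * remarkMu 1 i) < 6) := by
  intro lam hlam
  obtain ⟨h0, h1⟩ := hlam
  intro w
  have e0 : (∑ i, w i * remarkMu 0 i) = 5 * (1 - lam) := by
    simp [w, remarkMu, Fin.sum_univ_three]; ring
  have e1 : (∑ i, w i * remarkMu 1 i) = 5 * lam := by
    simp [w, remarkMu, Fin.sum_univ_three]; ring
  have e2 : (∑ i, w i * remarkMu 2 i) = 10 := by
    simp [w, remarkMu, Fin.sum_univ_three]; ring
  have e3 : (∑ i, w i * remarkMu 3 i) = 6 := by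
    simp [w, remarkMu, Fin.sum_univ_three]; ring
  have hmin : min (5 * lam) (5 * (1 - lam)) ≤ 5 / 2 := by
    rcases le_total lam (1/2) with h | h
    · exact le_trans (min_le_left _ _) (by linarith)
    · exact le_trans (min_le_right _ _) (by linarith)
  refine ⟨⟨?_, ?_⟩, ?_, ⟨e2, ?_⟩, ⟨e3, ?_⟩⟩
  · rcases le_total (5 * lam) (5 * (1 - lam)) with h | h
    · exact ⟨1, by rw [e1, min_eq_left h]⟩
    · exact ⟨0, by rw [e0, min_eq_right h]⟩
  · rintro v ⟨a, rfl⟩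
    have hc : a = 0 ∨ a = 1 ∨ a = 2 ∨ a = 3 := by omega
    rcases hc with rfl | rfl | rfl | rfl
    · rw [e0]; exact min_le_right _ _
    · rw [e1]; exact min_le_left _ _
    · rw [e2]; linarith
    · rw [e3]; linarith
  · intro a ha
    have hc : a = 0 ∨ a = 1 ∨ a = 2 ∨ a = 3 := by omega
    rcases hc with rfl | rfl | rfl | rfl
    · exact Or.inl rfl
    · exact Or.inr rfl
    · rw [e2] at ha; exfalso; linarith
    · rw [e3] at ha; exfalso; linarith
  · rw [e0, e1]
    have := min_le_left (5 * (1 - lam)) (5 * lam)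
    rcases le_total lam (1/2) with h | h
    · exact lt_of_le_of_lt (min_le_right _ _) (by linarith)
    · exact lt_of_le_of_lt (min_le_left _ _) (by linarith)
  · rw [e0, e1]
    rcases le_total lam (1/2) with h | h
    · exact lt_of_le_of_lt (min_le_right _ _) (by linarith)
    · exact lt_of_le_of_lt (min_le_left _ _) (by linarith)
end

section
/- Let N ≥ 1 be a natural number, and let M ≥ δ > 0 be real numbers. Let (v_t)_{t∈ℕ} be a sequence of functions v_t : Fin N → ℝ with 0 ≤ v₀(i) ≤ M for all i, and suppose that for every t there is an index i_t attaining the maximum of v_t (v_t(i_t) = max_i v_t(i)) such that v_{t+1}(i_t) = v_t(i_t)/2 and v_{t+1}(j) = v_t(j) for all j ≠ i_t. Then for every t ≥ N·⌈log₂(M/δ)⌉, max_i v_t(i) ≤ δ. -/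
/-- Abstract halving argument: if at each step the (an) entry
attaining the maximum of a nonnegative vector bounded by `M` is halved while all other
entries are unchanged, then after `N * ⌈log₂ (M/δ)⌉` steps the maximum is at most `δ`. -/
theorem halving_max_entries_bound
    (N : ℕ) (hN : 1 ≤ N) (M δ : ℝ) (hδ : 0 < δ) (hδM : δ ≤ M)
    (v : ℕ → Fin N → ℝ)
    (h0 : ∀ i, 0 ≤ v 0 i ∧ v 0 i ≤ M)
    (hstep : ∀ t : ℕ, ∃ i : Fin N, (∀ j, v t j ≤ v t i) ∧
      v (t + 1) i = v t i / 2 ∧ ∀ j, j ≠ i → v (t + 1) j = v t j) :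
    ∀ t : ℕ, N * ⌈Real.logb 2 (M / δ)⌉₊ ≤ t → ∀ i, v t i ≤ δ := by
  haveI : Nonempty (Fin N) := ⟨⟨0, hN⟩⟩
  classical
  -- nonnegativity
  have hnn : ∀ t i, 0 ≤ v t i := by
    intro t
    induction t with
    | zero => exact fun i => (h0 i).1
    | succ t ih =>
      intro j
      obtain ⟨i, hmax, hhalf, hoth⟩ := hstep t
      by_cases hj : j = i
      · subst hj; rw [hhalf]; linarith [ih j]
      · rw [hoth j hj]; exact ih j
  -- pointwise decreasing
  have hdec : ∀ t i, v (t + 1) i ≤ v t i := by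
    intro t j
    obtain ⟨i, hmax, hhalf, hoth⟩ := hstep t
    by_cases hj : j = i
    · subst hj; rw [hhalf]; linarith [hnn t j]
    · rw [hoth j hj]
  have hmono : ∀ s t : ℕ, s ≤ t → ∀ i, v t i ≤ v s i := by
    intro s t hst i
    induction hst with
    | refl => exact le_rfl
    | step _ ih => exact le_trans (hdec _ i) ih
  set mx : ℕ → ℝ := fun t => Finset.univ.sup' Finset.univ_nonempty (v t) with hmx
  have hmx_le : ∀ t i, v t i ≤ mx t := fun t i =>
    Finset.le_sup' (v t) (Finset.mem_univ i)
  have hmx_mono : ∀ s t : ℕ, s ≤ t → mx t ≤ mx s := by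
    intro s t hst
    apply Finset.sup'_le
    intro i _
    exact le_trans (hmono s t hst i) (hmx_le s i)
  -- key halving over a window of N steps
  have hkey : ∀ t : ℕ, mx (t + N) ≤ mx t / 2 := by
    intro t
    set g : Fin N → Fin N := fun s => (hstep (t + s)).choose with hg
    have hgmax : ∀ s : Fin N, ∀ j, v (t + s) j ≤ v (t + s) (g s) :=
      fun s => (hstep (t + s)).choose_spec.1
    have hghalf : ∀ s : Fin N, v (t + s + 1) (g s) = v (t + s) (g s) / 2 :=
      fun s => (hstep (t + s)).choose_spec.2.1
    by_cases hinj : Function.Injective g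
    · -- every index gets halved within the window
      have hsurj : Function.Surjective g := Finite.surjective_of_injective hinj
      apply Finset.sup'_le
      intro j _
      obtain ⟨s, hs⟩ := hsurj j
      have h1 : v (t + s + 1) (g s) ≤ mx t / 2 := by
        rw [hghalf s]
        have : v (t + s) (g s) ≤ mx t :=
          le_trans (hmono t (t + s) (Nat.le_add_right _ _) (g s)) (hmx_le t (g s))
        linarith
      have h2 : v (t + N) j ≤ v (t + s + 1) (g s) := by
        rw [hs]
        exact hmono (t + s + 1) (t + N) (by omega) j
      linarith
    · -- some index is halved twice; at the second time it is the max
      rw [Function.not_injective_iff] at hinj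
      obtain ⟨a, b, hab, hne⟩ := hinj
      wlog hlt : (a : ℕ) < (b : ℕ) generalizing a b
      · exact this b a hab.symm hne.symm (by omega)
      have h1 : v (t + a + 1) (g a) ≤ mx t / 2 := by
        rw [hghalf a]
        have : v (t + a) (g a) ≤ mx t :=
          le_trans (hmono t (t + a) (Nat.le_add_right _ _) (g a)) (hmx_le t (g a))
        linarith
      have h2 : v (t + b) (g b) ≤ v (t + a + 1) (g a) := by
        rw [← hab]
        exact hmono (t + a + 1) (t + b) (by omega) (g a)
      have h3 : mx (t + b) ≤ mx t / 2 := by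
        apply Finset.sup'_le
        intro j _
        exact le_trans (hgmax b j) (by linarith)
      exact le_trans (hmx_mono (t + b) (t + N) (by omega)) h3
  -- iterate
  have hiter : ∀ k : ℕ, mx (N * k) ≤ M / 2 ^ k := by
    intro k
    induction k with
    | zero =>
      simp only [Nat.mul_zero, pow_zero, div_one]
      exact Finset.sup'_le _ _ fun i _ => (h0 i).2
    | succ k ih =>
      have : mx (N * k + N) ≤ mx (N * k) / 2 := hkey (N * k)
      have heq : N * (k + 1) = N * k + N := by ring
      rw [heq, pow_succ]
      calc mx (N * k + N) ≤ mx (N * k) / 2 := hkey (N * k)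
        _ ≤ (M / 2 ^ k) / 2 := by linarith
        _ = M / (2 ^ k * 2) := by ring
  -- the key numeric bound
  set K := ⌈Real.logb 2 (M / δ)⌉₊ with hK
  have hMδ : (1 : ℝ) ≤ M / δ := (one_le_div hδ).mpr hδM
  have h2K : M / δ ≤ 2 ^ K := by
    have hlog : Real.logb 2 (M / δ) ≤ (K : ℝ) := Nat.le_ceil _
    have : M / δ = (2 : ℝ) ^ Real.logb 2 (M / δ) :=
      (Real.rpow_logb (by norm_num) (by norm_num) (by linarith)).symm
    rw [this]
    calc (2 : ℝ) ^ Real.logb 2 (M / δ) ≤ (2 : ℝ) ^ (K : ℝ) :=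
          Real.rpow_le_rpow_of_exponent_le one_le_two hlog
      _ = 2 ^ K := by rw [Real.rpow_natCast]
  have hfin : M / 2 ^ K ≤ δ := by
    rw [div_le_iff₀ (by positivity)]
    rw [div_le_iff₀ hδ] at h2K
    linarith
  intro t ht i
  calc v t i ≤ mx t := hmx_le t i
    _ ≤ mx (N * K) := hmx_mono (N * K) t ht
    _ ≤ M / 2 ^ K := hiter K
    _ ≤ δ := hfin
end
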